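/- arXiv:1612.05341 — 2 statements merged into one kernel-verified Lean document; each statement's English description precedes it below -/
import Mathlib

section
/- Let r : ℤ → ℝ³ be a discrete space curve with t_j = r_{j+1} − r_j, let k ∈ ℤ satisfy det[r_{k−1}, r_k, r_{k+1}] ≠ 0, and suppose the centroaffine torsion τ_k = det[t_{k−1}, t_k, t_{k+1}]/det[r_{k−1}, r_k, r_{k+1}] vanishes. Then the edge tangent vectors satisfy the planar chain relation t_{k+1} = −κ_k · t_{k−1} + κ̄_k · t_k, where κ_k = det[r_k, r_{k+1}, r_{k+2}]/det[r_{k−1}, r_k, r_{k+1}] and κ̄_k = det[r_{k+1}, t_{k−1}, r_{k+2}]/det[r_{k−1}, r_k, r_{k+1}]. -/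
noncomputable def det3 (u v w : Fin 3 → ℝ) : ℝ :=
  (Matrix.transpose (Matrix.of ![u, v, w])).det

/-!
Vanishing torsion says that `t (k+1)` lies in the plane of `t (k-1)` and `t k`, which are
independent because `det[r (k+1), t (k-1), t k] = det[r (k-1), r k, r (k+1)] ≠ 0`. Cramer's rule
with respect to the frame `r (k+1), t (k-1), t k` then gives the coefficients of `t (k+1)`, and
with this choice of frame they are exactly `-κ` and `κ̄`.
-/

lemma det3_eq (u v w : Fin 3 → ℝ) :
    det3 u v w = u 0 * v 1 * w 2 - u 0 * w 1 * v 2 - v 0 * u 1 * w 2 + v 0 * w 1 * u 2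
      + w 0 * u 1 * v 2 - w 0 * v 1 * u 2 := by
  simp only [det3, Matrix.det_fin_three, Matrix.transpose_apply, Matrix.of_apply,
    Matrix.cons_val_zero, Matrix.cons_val_one, Matrix.cons_val_two, Matrix.head_cons,
    Matrix.tail_cons]

lemma det3_smul_eq_cramer (a u v x : Fin 3 → ℝ) :
    det3 a u v • x = det3 u v x • a + det3 a x v • u + det3 a u x • v := by
  funext i
  fin_cases i <;>
    · simp only [det3_eq, Pi.add_apply, Pi.smul_apply, smul_eq_mul, Fin.zero_eta, Fin.mk_one,
        Fin.reduceFinMk]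
      ring

lemma eq_smul_add_smul_of_det3_eq_zero {a u v x : Fin 3 → ℝ} (ha : det3 a u v ≠ 0)
    (hx : det3 u v x = 0) :
    x = (det3 a x v / det3 a u v) • u + (det3 a u x / det3 a u v) • v := by
  have h := det3_smul_eq_cramer a u v x
  rw [hx, zero_smul, zero_add] at h
  rw [div_eq_inv_mul, div_eq_inv_mul, mul_smul, mul_smul, ← smul_add, ← h, inv_smul_smul₀ ha]

lemma det3_sub_sub_eq (p₀ p₁ p₂ : Fin 3 → ℝ) :
    det3 p₂ (p₁ - p₀) (p₂ - p₁) = det3 p₀ p₁ p₂ := by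
  simp only [det3_eq, Pi.sub_apply]; ring

lemma det3_sub_sub_eq_neg (p₁ p₂ p₃ : Fin 3 → ℝ) :
    det3 p₂ (p₃ - p₂) (p₂ - p₁) = -det3 p₁ p₂ p₃ := by
  simp only [det3_eq, Pi.sub_apply]; ring

lemma det3_third_sub_first (a u w : Fin 3 → ℝ) : det3 a u (w - a) = det3 a u w := by
  simp only [det3_eq, Pi.sub_apply]; ring

/-- If the centroaffine torsion vanishes at `k`, the edge tangent vectors satisfy the
planar chain relation `t (k+1) = -κ • t (k-1) + κ̄ • t k`. -/
theorem tangent_chain_of_torsion_zero (r : ℤ → Fin 3 → ℝ) (t : ℤ → Fin 3 → ℝ)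
    (ht : ∀ j, t j = r (j + 1) - r j) (k : ℤ)
    (hnd : det3 (r (k - 1)) (r k) (r (k + 1)) ≠ 0)
    (κ κbar : ℝ)
    (hκ : κ = det3 (r k) (r (k + 1)) (r (k + 2)) / det3 (r (k - 1)) (r k) (r (k + 1)))
    (hκbar : κbar = det3 (r (k + 1)) (t (k - 1)) (r (k + 2)) / det3 (r (k - 1)) (r k) (r (k + 1)))
    (hτ : det3 (t (k - 1)) (t k) (t (k + 1)) / det3 (r (k - 1)) (r k) (r (k + 1)) = 0) :
    t (k + 1) = (-κ) • t (k - 1) + κbar • t k := by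
  have hprev : t (k - 1) = r k - r (k - 1) := by simpa using ht (k - 1)
  have hnext : t (k + 1) = r (k + 2) - r (k + 1) := by rw [ht]; ring_nf
  have hframe : det3 (r (k + 1)) (t (k - 1)) (t k) = det3 (r (k - 1)) (r k) (r (k + 1)) := by
    rw [hprev, ht, det3_sub_sub_eq]
  have hplanar : det3 (t (k - 1)) (t k) (t (k + 1)) = 0 := (div_eq_zero_iff.mp hτ).resolve_right hnd
  rw [eq_smul_add_smul_of_det3_eq_zero (hframe ▸ hnd) hplanar, hframe, hκ, hκbar, ← neg_div]
  congr 3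
  · rw [hnext, ht, det3_sub_sub_eq_neg]
  · rw [hnext, det3_third_sub_first]
end

section
/- Let r : ℤ → ℝ³ be a discrete centroaffine curve, i.e. det[r_{k−1}, r_k, r_{k+1}] ≠ 0 for all k ∈ ℤ, with edge tangents t_j = r_{j+1} − r_j. If its centroaffine torsion vanishes identically, i.e. det[t_{k−1}, t_k, t_{k+1}] = 0 for all k ∈ ℤ, then the curve is planar: every point r_k lies in the affine plane r_0 + span_ℝ{t_0, t_1}, i.e. r_k − r_0 ∈ span_ℝ{t_0, t_1} for all k ∈ ℤ. -/
/-!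
Column operations give `det[r_k, t_k, t_{k+1}] = det[r_k, r_{k+1}, r_{k+2}] ≠ 0`, so consecutive
tangents are linearly independent. Vanishing torsion then puts `t_{k+2}` in the plane spanned by
`t_k, t_{k+1}` and, symmetrically, `t_k` in the plane spanned by `t_{k+1}, t_{k+2}`; hence this
plane does not depend on `k`. All tangents lie in it, and so do the differences `r_k - r_0`, since
modulo the plane the points `r_k` are all equal.
-/

theorem det3_ne_zero_iff_linearIndependent (u v w : Fin 3 → ℝ) :
    det3 u v w ≠ 0 ↔ LinearIndependent ℝ ![u, v, w] := by
  rw [det3, Matrix.det_transpose, ← isUnit_iff_ne_zero, ← Matrix.isUnit_iff_isUnit_det,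
    ← Matrix.linearIndependent_rows_iff_isUnit]
  rfl

theorem det3_ne_zero_iff {u v w : Fin 3 → ℝ} :
    det3 u v w ≠ 0 ↔ LinearIndependent ℝ ![v, w] ∧ u ∉ Submodule.span ℝ {v, w} := by
  rw [det3_ne_zero_iff_linearIndependent, ← Matrix.range_cons_cons_empty v w ![]]
  exact linearIndependent_finCons

theorem det3_rotate (u v w : Fin 3 → ℝ) : det3 u v w = det3 v w u := by
  simp only [det3, Matrix.det_transpose, Matrix.det_fin_three, Matrix.of_apply, Matrix.cons_val',
    Matrix.cons_val_fin_one, Matrix.cons_val_zero, Matrix.cons_val_one, Matrix.cons_val]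
  ring

theorem det3_sub_sub (a b c : Fin 3 → ℝ) : det3 a (b - a) (c - b) = det3 a b c := by
  simp only [det3, Matrix.det_transpose, Matrix.det_fin_three, Matrix.of_apply, Matrix.cons_val',
    Matrix.cons_val_fin_one, Matrix.cons_val_zero, Matrix.cons_val_one, Matrix.cons_val, Pi.sub_apply]
  ring

theorem mem_span_pair_of_det3_eq_zero {u v w : Fin 3 → ℝ} (h : det3 u v w = 0)
    (hvw : LinearIndependent ℝ ![v, w]) : u ∈ Submodule.span ℝ {v, w} := by
  by_contra hu
  exact det3_ne_zero_iff.2 ⟨hvw, hu⟩ h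

theorem Int.apply_eq_apply_zero_of_apply_add_one {α : Type*} {f : ℤ → α}
    (h : ∀ k, f (k + 1) = f k) (k : ℤ) : f k = f 0 := by
  simpa using Function.Periodic.int_mul_eq (c := 1) h k

section TorsionFree

variable {r t : ℤ → Fin 3 → ℝ} (ht : ∀ j, t j = r (j + 1) - r j)
  (hnd : ∀ k : ℤ, det3 (r (k - 1)) (r k) (r (k + 1)) ≠ 0)
include ht hnd

theorem linearIndependent_tangent_pair (k : ℤ) :
    LinearIndependent ℝ ![t k, t (k + 1)] := by
  have h := hnd (k + 1)
  rw [add_sub_cancel_right, ← det3_sub_sub, ← ht, ← ht] at h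
  exact (det3_ne_zero_iff.1 h).1

theorem span_tangent_pair_succ (hτ : ∀ k : ℤ, det3 (t (k - 1)) (t k) (t (k + 1)) = 0) (k : ℤ) :
    Submodule.span ℝ {t (k + 1), t (k + 1 + 1)} = Submodule.span ℝ {t k, t (k + 1)} := by
  have hτk : det3 (t k) (t (k + 1)) (t (k + 1 + 1)) = 0 := by
    simpa using hτ (k + 1)
  apply le_antisymm <;> rw [Submodule.span_le, Set.insert_subset_iff, Set.singleton_subset_iff]
  · refine ⟨Submodule.subset_span (by simp), ?_⟩
    refine mem_span_pair_of_det3_eq_zero ?_ (linearIndependent_tangent_pair ht hnd k)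
    rwa [det3_rotate]
  · refine ⟨?_, Submodule.subset_span (by simp)⟩
    exact mem_span_pair_of_det3_eq_zero hτk (linearIndependent_tangent_pair ht hnd (k + 1))

end TorsionFree

/-- A discrete centroaffine curve with identically vanishing centroaffine torsion is
planar: every point lies in the affine plane through `r 0` spanned by `t 0` and `t 1`. -/
theorem planar_of_torsion_zero (r : ℤ → Fin 3 → ℝ) (t : ℤ → Fin 3 → ℝ)
    (ht : ∀ j, t j = r (j + 1) - r j)
    (hnd : ∀ k : ℤ, det3 (r (k - 1)) (r k) (r (k + 1)) ≠ 0)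
    (hτ : ∀ k : ℤ, det3 (t (k - 1)) (t k) (t (k + 1)) = 0) :
    ∀ k : ℤ, r k - r 0 ∈ Submodule.span ℝ ({t 0, t 1} : Set (Fin 3 → ℝ)) := by
  set V := Submodule.span ℝ ({t 0, t 1} : Set (Fin 3 → ℝ))
  have hplane (k : ℤ) : Submodule.span ℝ {t k, t (k + 1)} = V := by
    rw [Int.apply_eq_apply_zero_of_apply_add_one (f := fun k => Submodule.span ℝ {t k, t (k + 1)})
      (span_tangent_pair_succ ht hnd hτ) k, zero_add]
  have htV : ∀ k, t k ∈ V := fun k => hplane k ▸ Submodule.subset_span (by simp)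
  intro k
  rw [← Submodule.Quotient.eq]
  refine Int.apply_eq_apply_zero_of_apply_add_one (f := fun k => V.mkQ (r k)) (fun k => ?_) k
  simpa [Submodule.Quotient.eq, ← ht] using htV k
end
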